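/- Suppose w = u₁ a₁ u₂ a₁ ⋯ a₁ u_{k−1} a₁ u_k is rich and square-free over an alphabet {a₁,…,a_n} with n, k ≥ 3, where Alph(u₁) = {a₂,…,a_n}, a₁ occurs in no u_i (and possibly u_k is empty). Then for 2 ≤ i ≤ k−1, each u_i is a nonempty palindrome of odd length, and writing u_i = v_i a_i reverse(v_i) with a_i its middle letter, one has Alph(u_{i+1}) ⊆ Alph(u_i) \ {a_i}. -/

import Mathlib

/-- A word is a palindrome if it equals its reversal. -/
def Palindromic {α : Type*} (w : List α) : Prop := w.reverse = w

/-- A finite word is rich if it has exactly |w|+1 distinct palindromic factors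
(including the empty word). -/
def Rich {α : Type*} (w : List α) : Prop :=
  {p : List α | p <:+: w ∧ Palindromic p}.ncard = w.length + 1

/-- A word is square-free if it has no factor of the form `u ++ u` with `u` nonempty. -/
def SqFree {α : Type*} (w : List α) : Prop :=
  ∀ u : List α, u ≠ [] → ¬ (u ++ u) <:+: w

/-!
In a rich word every complete return `c m c` (with `c ∉ m`) is a palindrome, and in a square-free
word every nonempty palindrome has the form `v c vᴿ`. So each inner block `u i` is such a
palindrome; its centre `c` occurs once in it, the previous block ends with `c vᴿ`, and an
occurrence of `c` in `u (i + 1)` would create the square `(c vᴿ a₁ v)²`. A letter `x` of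
`u (i + 1)` missing from `u i` occurs in `u 0`, and the complete return to `x` across `u i` is a
palindrome: either its mirror image exhibits `u i` as an earlier block, impossible because by
induction the alphabets of the blocks strictly decrease, or it puts `x` into `u i` or `c` into
`u (i + 1)`.
-/

section RichWords

open List

variable {α : Type*}

namespace List

theorem eq_append_cons_of_mem_last {a : α} {l : List α} (h : a ∈ l) :
    ∃ s t, l = s ++ a :: t ∧ a ∉ t := by
  obtain ⟨s, t, hst, hs⟩ := eq_append_cons_of_mem (mem_reverse.2 h)
  exact ⟨t.reverse, s.reverse, by simpa using congrArg reverse hst, by simpa using hs⟩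

theorem append_cons_inj_of_notMem_left {a : α} {x₁ x₂ z₁ z₂ : List α}
    (h : x₁ ++ a :: z₁ = x₂ ++ a :: z₂) (h₁ : a ∉ x₁) (h₂ : a ∉ x₂) :
    x₁ = x₂ ∧ z₁ = z₂ := by
  rcases append_eq_append_iff.1 h with ⟨c, rfl, hc⟩ | ⟨c, rfl, hc⟩ <;> cases c <;> simp_all

theorem intercalate_append_singleton (sep x : List α) {l : List (List α)} (hl : l ≠ []) :
    sep.intercalate (l ++ [x]) = sep.intercalate l ++ sep ++ x := by
  induction l with
  | nil => exact absurd rfl hl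
  | cons y l ih =>
    rcases eq_or_ne l [] with rfl | hl'
    · simp [intercalate_cons_of_ne_nil]
    · rw [cons_append, intercalate_cons_of_ne_nil (by simp), intercalate_cons_of_ne_nil hl',
        ih hl']
      simp

variable [DecidableEq α]

theorem length_splitOn (a : α) (l : List α) : (l.splitOn a).length = l.count a + 1 := by
  induction l with
  | nil => simp
  | cons b l ih =>
    rw [splitOn_cons_eq_if_modifyHead]
    split <;> simp_all

theorem splitOn_append_cons_append_cons {a : α} {p : List α} (hp : a ∉ p) (X Y : List α) :
    (X ++ a :: (p ++ a :: Y)).splitOn a = X.splitOn a ++ p :: Y.splitOn a := by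
  rw [splitOn_append_cons_self, splitOn_append_cons_self_of_not_mem hp]

end List

theorem palindromic_iff {p : List α} : Palindromic p ↔ p.reverse = p := Iff.rfl

theorem palindromic_append_singleton_append_reverse (v : List α) (c : α) :
    Palindromic (v ++ [c] ++ v.reverse) := by
  simp [palindromic_iff]

theorem Palindromic.eq_reverse_of_append_cons {a : α} {P Q : List α}
    (h : Palindromic (P ++ a :: Q)) (hP : a ∉ P) (hQ : a ∉ Q) : P = Q.reverse := by
  have : P ++ a :: Q = Q.reverse ++ a :: P.reverse := by
    conv_lhs => rw [← palindromic_iff.1 h]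
    simp
  exact (append_cons_inj_of_notMem_left this hP (by simpa using hQ)).1

theorem SqFree.exists_eq_center {w p : List α} (hw : SqFree w) (hp : p <:+: w)
    (hpal : Palindromic p) (hne : p ≠ []) : ∃ v c, p = v ++ [c] ++ v.reverse := by
  have hP := Palindrome.of_reverse_eq hpal
  clear hpal
  induction hP with
  | nil => exact absurd rfl hne
  | singleton c => exact ⟨[], c, rfl⟩
  | @cons_concat x l _ ih =>
    rcases eq_or_ne l [] with rfl | hl
    · exact absurd hp (hw [x] (by simp))
    · obtain ⟨v, c, rfl⟩ := ih ((infix_cons (infix_append [] l [x])).trans hp) hl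
      exact ⟨x :: v, c, by simp⟩

def palFactors (w : List α) : Set (List α) := {p | p <:+: w ∧ Palindromic p}

theorem rich_iff {w : List α} : Rich w ↔ (palFactors w).ncard = w.length + 1 := Iff.rfl

theorem finite_palFactors (w : List α) : (palFactors w).Finite :=
  w.sublists.finite_toSet.subset fun _ hp => mem_sublists.2 hp.1.sublist

theorem nil_mem_palFactors (w : List α) : [] ∈ palFactors w := ⟨nil_infix, rfl⟩

theorem palFactors_nil : palFactors ([] : List α) = {[]} := by
  ext p
  simp only [palFactors, infix_nil, Set.mem_ofPred_eq, Set.mem_singleton_iff]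
  exact ⟨And.left, fun h => ⟨h, h ▸ rfl⟩⟩

theorem eq_concat_of_mem_palFactors_concat_diff {q p : List α} {x : α}
    (hp : p ∈ palFactors (q ++ [x]) \ palFactors q) : ∃ t, p = t ++ [x] ∧ t <:+ q := by
  obtain ⟨⟨hpx, hpal⟩, hpq⟩ := hp
  have hsuf : p <:+ q ++ [x] :=
    (infix_concat_iff.1 hpx).resolve_right fun h => hpq ⟨h, hpal⟩
  exact (suffix_concat_iff.1 hsuf).resolve_left fun h => hpq (h ▸ nil_mem_palFactors q)

/-- Of two new palindromic suffixes, the shorter is a suffix, hence a proper prefix, of the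
longer one, so it already occurs in `q`. -/
theorem subsingleton_palFactors_concat_diff (q : List α) (x : α) :
    (palFactors (q ++ [x]) \ palFactors q).Subsingleton := by
  intro p₁ h₁ p₂ h₂
  wlog hl : p₁.length ≤ p₂.length generalizing p₁ p₂
  · exact (this h₂ h₁ (le_of_not_ge hl)).symm
  obtain ⟨t₁, rfl, ht₁⟩ := eq_concat_of_mem_palFactors_concat_diff h₁
  obtain ⟨t₂, rfl, ht₂⟩ := eq_concat_of_mem_palFactors_concat_diff h₂
  have hsuf : t₁ ++ [x] <:+ t₂ ++ [x] :=
    suffix_append_self_iff.2 (suffix_of_suffix_length_le ht₁ ht₂ (by simpa using hl))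
  have hpre : t₁ ++ [x] <+: t₂ ++ [x] := by
    rw [← reverse_suffix, palindromic_iff.1 h₁.1.2, palindromic_iff.1 h₂.1.2]
    exact hsuf
  refine (prefix_concat_iff.1 hpre).resolve_right fun h => h₁.2 ⟨?_, h₁.1.2⟩
  exact h.isInfix.trans ht₂.isInfix

theorem ncard_palFactors_concat_le (q : List α) (x : α) :
    (palFactors (q ++ [x])).ncard ≤ (palFactors q).ncard + 1 := by
  set N := palFactors (q ++ [x]) \ palFactors q
  have hN : N.Finite := (finite_palFactors _).sdiff
  calc (palFactors (q ++ [x])).ncard ≤ (palFactors q ∪ N).ncard :=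
        Set.ncard_le_ncard (by rw [Set.union_sdiff_self]; exact Set.subset_union_right)
          ((finite_palFactors q).union hN)
    _ ≤ (palFactors q).ncard + N.ncard := Set.ncard_union_le _ _
    _ ≤ (palFactors q).ncard + 1 := by
        gcongr
        exact (Set.ncard_le_one_iff hN).2 fun hp hp' =>
          subsingleton_palFactors_concat_diff q x hp hp'

theorem ncard_palFactors_append_le (q t : List α) :
    (palFactors (q ++ t)).ncard ≤ (palFactors q).ncard + t.length := by
  induction t generalizing q with
  | nil => simp
  | cons x t ih =>
    have h₁ := ih (q ++ [x])
    have h₂ := ncard_palFactors_concat_le q x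
    rw [append_assoc, singleton_append] at h₁
    rw [length_cons]
    omega

/-- Otherwise the prefix `q ++ [x]` adds no palindrome to `q`, and the count `|w| + 1` can no
longer be reached. -/
theorem Rich.exists_palindromic_suffix_not_infix {w q : List α} {x : α} (hw : Rich w)
    (hq : q ++ [x] <+: w) : ∃ s, s <:+ q ++ [x] ∧ Palindromic s ∧ ¬ s <:+: q := by
  by_contra! h
  obtain ⟨t, rfl⟩ := hq
  have hsub : palFactors (q ++ [x]) ⊆ palFactors q := fun p hp =>
    ⟨(infix_concat_iff.1 hp.1).elim (fun hs => h p hs hp.2) id, hp.2⟩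
  have h₁ := ncard_palFactors_append_le (q ++ [x]) t
  have h₂ := Set.ncard_le_ncard hsub (finite_palFactors q)
  have h₃ := ncard_palFactors_append_le [] q
  rw [nil_append, palFactors_nil, Set.ncard_singleton] at h₃
  have h₄ := rich_iff.1 hw
  simp only [length_append, length_singleton] at h₄
  omega

/-- By induction on the position of the return: the palindromic suffix that is new in the prefix
ending with the return is either the return itself or a longer palindrome, whose mirror image
contains an earlier return to `c` with the reversed middle. -/
theorem Rich.palindromic_of_complete_return {w m : List α} {c : α} (hw : Rich w)
    (h : [c] ++ m ++ [c] <:+: w) (hcm : c ∉ m) : Palindromic m := by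
  obtain ⟨A, B, hAB⟩ := h
  induction hn : A.length using Nat.strong_induction_on generalizing A m B with
  | _ n ih =>
  have of_eq : ∀ {t}, t ++ [c] = [c] ++ m ++ [c] → Palindromic (t ++ [c]) →
      Palindromic m := by
    intro t ht hpal
    rw [ht] at hpal
    simpa [palindromic_iff] using hpal
  obtain ⟨s, hsuf, hspal, hsnew⟩ :=
    hw.exists_palindromic_suffix_not_infix (q := A ++ [c] ++ m) (x := c) ⟨B, by simpa using hAB⟩
  obtain ⟨t, rfl, -⟩ := (suffix_concat_iff.1 hsuf).resolve_left fun h => hsnew (h ▸ nil_infix)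
  have hrev : t ++ [c] = c :: t.reverse := by
    conv_lhs => rw [← palindromic_iff.1 hspal]
    simp
  have hret : [c] ++ m ++ [c] <:+ A ++ [c] ++ m ++ [c] := ⟨A, by simp⟩
  rcases suffix_or_suffix_of_suffix hsuf hret with h | ⟨A₂, hA₂⟩
  · rcases suffix_cons_iff.1 (by simpa using h) with h | ⟨e, he⟩
    · exact of_eq (by simpa using h) hspal
    · rw [hrev] at he
      obtain ⟨-, -, ht⟩ := (append_cons_inj_of_notMem hcm not_mem_nil).1 he.symm
      rw [eq_comm, reverse_eq_nil_iff] at ht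
      subst ht
      exact absurd ⟨A, m, by simp⟩ hsnew
  · obtain ⟨e, he⟩ := hsuf
    have hA : A = e ++ A₂ := by
      rw [← hA₂, ← append_assoc,
        show A ++ [c] ++ m ++ [c] = A ++ ([c] ++ m ++ [c]) by simp] at he
      exact (append_cancel_right he).symm
    rcases eq_or_ne A₂ [] with rfl | hA₂ne
    · exact of_eq (by simpa using hA₂.symm) hspal
    · have hmirror : t ++ [c] = [c] ++ m.reverse ++ [c] ++ A₂.reverse := by
        rw [← palindromic_iff.1 hspal, ← hA₂]
        simp
      have hlt : e.length < n := by
        rw [← hn, hA, length_append]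
        have := length_pos_iff.2 hA₂ne
        omega
      have := ih e.length hlt (show c ∉ m.reverse by simpa using hcm) e (A₂.reverse ++ B)
        (by rw [← hAB, hA, append_assoc e A₂, hA₂, hmirror]; simp) rfl
      rw [palindromic_iff, reverse_reverse] at this
      exact this.symm

theorem Rich.center_notMem {w v : List α} {c : α} (hw : Rich w) (hsf : SqFree w)
    (h : v ++ [c] ++ v.reverse <:+: w) : c ∉ v := by
  intro hcv
  obtain ⟨ρ, τ, hρτ, hcρ⟩ := eq_append_cons_of_mem (mem_reverse.2 hcv)
  have hv : v = τ.reverse ++ c :: ρ.reverse := by simpa using congrArg reverse hρτ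
  have hret : [c] ++ ρ ++ [c] <:+: v ++ [c] ++ v.reverse := ⟨v, τ, by rw [hρτ]; simp⟩
  have hρ : ρ.reverse = ρ :=
    palindromic_iff.1 (hw.palindromic_of_complete_return (hret.trans h) hcρ)
  have hsq : (c :: ρ) ++ (c :: ρ) <:+: v ++ [c] ++ v.reverse :=
    ⟨τ.reverse, c :: τ, by rw [hρτ, hv, hρ]; simp⟩
  exact hsf (c :: ρ) (cons_ne_nil c ρ) (hsq.trans h)

theorem Rich.singleton_append_reverse_suffix {w u v : List α} {a c : α} (hw : Rich w)
    (h : u ++ [a] ++ v ++ [c] <:+: w) (hcu : c ∈ u) (hau : a ∉ u) (hav : a ∉ v)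
    (hcv : c ∉ v) (hca : c ≠ a) : [c] ++ v.reverse <:+ u := by
  obtain ⟨θ, ζ, rfl, hcζ⟩ := eq_append_cons_of_mem_last hcu
  have hret : [c] ++ (ζ ++ a :: v) ++ [c] <:+: w :=
    (infix_append θ _ []).trans (by simpa using h)
  have hpal := hw.palindromic_of_complete_return hret (by simp [hcζ, hca, hcv])
  have hζ : ζ = v.reverse := hpal.eq_reverse_of_append_cons (fun h => hau (by simp [h])) hav
  exact ⟨θ, by simp [hζ]⟩

theorem Rich.notMem_of_infix_reverse_append_center {w u v : List α} {a c : α} (hw : Rich w)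
    (hsf : SqFree w) (h : [c] ++ v.reverse ++ [a] ++ (v ++ [c] ++ v.reverse) ++ [a] ++ u <:+: w)
    (hau : a ∉ u) (hav : a ∉ v) (hcv : c ∉ v) (hca : c ≠ a) : c ∉ u := by
  intro hcu
  obtain ⟨β, δ, rfl, hcβ⟩ := eq_append_cons_of_mem hcu
  have hret : [c] ++ (v.reverse ++ a :: β) ++ [c] <:+: w :=
    (infix_append ([c] ++ v.reverse ++ [a] ++ v) _ δ).trans (by simpa using h)
  have hpal := hw.palindromic_of_complete_return hret (by simp [hcv, hca, hcβ])
  have hβ : β = v := by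
    simpa [eq_comm] using
      hpal.eq_reverse_of_append_cons (by simpa using hav) (fun h => hau (by simp [h]))
  subst hβ
  have hsq : ([c] ++ β.reverse ++ [a] ++ β) ++ ([c] ++ β.reverse ++ [a] ++ β) <:+: w :=
    (infix_append [] _ (c :: δ)).trans (by simpa using h)
  exact hsf _ (by simp) hsq

end RichWords

section Blocks

open List

variable {α : Type*} {a : α} {u : ℕ → List α}

def blockPrefix (a : α) (u : ℕ → List α) (i : ℕ) : List α :=
  [a].intercalate ((range i).map u)

theorem blockPrefix_one : blockPrefix a u 1 = u 0 := by
  simp [blockPrefix]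

theorem blockPrefix_succ {i : ℕ} (hi : i ≠ 0) :
    blockPrefix a u (i + 1) = blockPrefix a u i ++ [a] ++ u i := by
  rw [blockPrefix, range_succ, map_append, map_singleton,
    intercalate_append_singleton _ _ (by simpa using hi)]
  rfl

theorem blockPrefix_prefix {i j : ℕ} (hi : i ≠ 0) (hij : i ≤ j) :
    blockPrefix a u i <+: blockPrefix a u j := by
  induction j, hij using Nat.le_induction with
  | base => exact prefix_refl _
  | succ j hij ih =>
    rw [blockPrefix_succ (by omega), append_assoc]
    exact ih.trans (prefix_append _ _)

theorem suffix_blockPrefix_succ (i : ℕ) : u i <:+ blockPrefix a u (i + 1) := by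
  rcases i with _ | i
  · rw [blockPrefix_one]
  · rw [blockPrefix_succ (by omega)]
    exact suffix_append _ _

theorem exists_blockPrefix_eq {i k : ℕ} (hi : i + 3 ≤ k) : ∃ R, blockPrefix a u k =
    blockPrefix a u (i + 1) ++ [a] ++ u (i + 1) ++ [a] ++ u (i + 2) ++ R := by
  obtain ⟨R, hR⟩ := blockPrefix_prefix (a := a) (u := u) (i := i + 3) (by omega) hi
  refine ⟨R, ?_⟩
  rw [← hR, blockPrefix_succ (by omega), blockPrefix_succ (by omega)]

variable [DecidableEq α]

theorem count_blockPrefix_succ (ha : ∀ j, a ∉ u j) (i : ℕ) :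
    (blockPrefix a u (i + 1)).count a = i := by
  induction i with
  | zero => rw [blockPrefix_one, count_eq_zero]; exact ha 0
  | succ i ih =>
    rw [blockPrefix_succ (by omega), count_append, count_append, ih,
      count_eq_zero_of_not_mem (ha _)]
    simp

theorem eq_block_of_blockPrefix_eq (ha : ∀ j, a ∉ u j) {k : ℕ} {X p Y : List α}
    (h : blockPrefix a u k = X ++ a :: (p ++ a :: Y)) (hp : a ∉ p) :
    u (X.count a + 1) = p := by
  have hk : range k ≠ [] := by
    rintro hk
    simp [blockPrefix, hk] at h
  have hsplit := splitOn_intercalate a (ls := (range k).map u) (by simp [ha])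
    (by simpa using hk)
  rw [← blockPrefix, h, splitOn_append_cons_append_cons hp] at hsplit
  have hidx : ((range k).map u)[(X.splitOn a).length]? = some p := by
    rw [← hsplit]
    simp
  rw [length_splitOn, getElem?_map] at hidx
  obtain ⟨j, hj, rfl⟩ := Option.map_eq_some_iff.1 hidx
  obtain ⟨_, rfl⟩ := List.getElem?_eq_some_iff.1 hj
  rw [getElem_range]

variable {c : α} {k i : ℕ} {v : List α}

theorem subset_of_rich_blocks (hr : Rich (blockPrefix a u k)) (ha : ∀ j, a ∉ u j)
    (hu0 : ∀ x ∈ blockPrefix a u k, x ≠ a → x ∈ u 0) (hi : i + 3 ≤ k)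
    (hdist : ∀ t, 1 ≤ t → t ≤ i → u t ≠ u (i + 1))
    (hvc : u (i + 1) = v ++ [c] ++ v.reverse) (hsuf : [c] ++ v.reverse <:+ u i)
    (hc : c ∉ u (i + 2)) : u (i + 2) ⊆ u (i + 1) := by
  intro x hx
  by_contra hxi
  obtain ⟨R, hR⟩ := exists_blockPrefix_eq (a := a) (u := u) hi
  have hxa : x ≠ a := fun h => ha _ (h ▸ hx)
  have hu0P : u 0 <+: blockPrefix a u (i + 1) := by
    simpa [blockPrefix_one] using blockPrefix_prefix (a := a) (u := u) one_ne_zero (by omega)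
  have hxP : x ∈ blockPrefix a u (i + 1) :=
    hu0P.subset (hu0 x (by rw [hR]; simp [hx]) hxa)
  obtain ⟨A, m, hP, hxm⟩ := eq_append_cons_of_mem_last hxP
  obtain ⟨β, δ, hβ, hxβ⟩ := eq_append_cons_of_mem hx
  have hpal : Palindromic (m ++ a :: (u (i + 1) ++ a :: β)) :=
    hr.palindromic_of_complete_return (c := x) ⟨A, δ ++ R, by rw [hR, hP, hβ]; simp⟩
      (by simp [hxm, hxa, hxi, hxβ])
  have hmirror : m ++ a :: (u (i + 1) ++ a :: β) =
      β.reverse ++ a :: (u (i + 1) ++ a :: m.reverse) := by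
    conv_lhs => rw [← palindromic_iff.1 hpal]
    simp [hvc]
  have haβ : a ∉ β := fun h => ha (i + 2) (by simp [hβ, h])
  by_cases ham : a ∈ m
  · have hblock := eq_block_of_blockPrefix_eq ha (X := A ++ x :: β.reverse) (p := u (i + 1))
      (Y := m.reverse ++ x :: (δ ++ R))
      (by rw [hR, hP, hβ]; simpa using congrArg (fun l => A ++ x :: (l ++ x :: (δ ++ R))) hmirror)
      (ha _)
    have hcount : (blockPrefix a u (i + 1)).count a = i := count_blockPrefix_succ ha i
    rw [hP] at hcount
    have : 0 < m.count a := count_pos_iff.2 ham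
    simp [hxa, count_eq_zero_of_not_mem haβ] at hcount hblock
    exact hdist _ (by omega) (by omega) hblock
  · have hm : m = β.reverse :=
      (append_cons_inj_of_notMem_left hmirror ham (by simpa using haβ)).1
    have hxsuf : x :: m <:+ blockPrefix a u (i + 1) := ⟨A, by rw [hP]⟩
    have hcsuf : c :: v.reverse <:+ blockPrefix a u (i + 1) :=
      hsuf.trans (suffix_blockPrefix_succ i)
    rcases suffix_or_suffix_of_suffix hxsuf hcsuf with h | h
    · have : x ∈ c :: v.reverse := h.subset mem_cons_self
      exact hxi (by rw [hvc]; simp_all)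
    · have hcx : c ≠ x := by rintro rfl; exact hxi (by simp [hvc])
      have : c ∈ x :: m := h.subset mem_cons_self
      exact hc (by simp_all)

theorem exists_center_and_subset_of_prev (hr : Rich (blockPrefix a u k))
    (hsf : SqFree (blockPrefix a u k)) (ha : ∀ j, a ∉ u j)
    (hu0 : ∀ x ∈ blockPrefix a u k, x ≠ a → x ∈ u 0) (hi : i + 3 ≤ k)
    (hprev : (u (i + 1)).toFinset ⊆ (u i).toFinset)
    (hdist : ∀ t, 1 ≤ t → t ≤ i → u t ≠ u (i + 1)) :
    ∃ v c, u (i + 1) = v ++ [c] ++ v.reverse ∧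
      (u (i + 2)).toFinset ⊆ (u (i + 1)).toFinset \ {c} := by
  obtain ⟨R, hR⟩ := exists_blockPrefix_eq (a := a) (u := u) hi
  obtain ⟨D, hD⟩ := suffix_blockPrefix_succ (a := a) (u := u) i
  have hfac : u i ++ [a] ++ u (i + 1) ++ [a] ++ u (i + 2) <:+: blockPrefix a u k :=
    ⟨D, R, by rw [hR, ← hD]; simp⟩
  have hret : [a] ++ u (i + 1) ++ [a] <:+: blockPrefix a u k :=
    (infix_append (u i) _ (u (i + 2))).trans (by simpa using hfac)
  have hne : u (i + 1) ≠ [] := by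
    rintro h
    exact hsf [a] (by simp) (by simpa [h] using hret)
  have hblock : u (i + 1) <:+: blockPrefix a u k := (infix_append [a] _ [a]).trans hret
  obtain ⟨v, c, hvc⟩ :=
    hsf.exists_eq_center hblock (hr.palindromic_of_complete_return hret (ha _)) hne
  have hcv : c ∉ v := hr.center_notMem hsf (hvc ▸ hblock)
  have hca : c ≠ a := fun h => ha (i + 1) (by simp [hvc, h])
  have hav : a ∉ v := fun h => ha (i + 1) (by simp [hvc, h])
  have hsuf : [c] ++ v.reverse <:+ u i :=
    hr.singleton_append_reverse_suffix
      ((infix_append [] _ (v.reverse ++ [a] ++ u (i + 2))).trans (by simpa [hvc] using hfac))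
      (mem_toFinset.1 (hprev (by simp [hvc]))) (ha i) hav hcv hca
  obtain ⟨θ, hθ⟩ := hsuf
  have hcnext : c ∉ u (i + 2) := hr.notMem_of_infix_reverse_append_center hsf
    (IsInfix.trans ⟨θ, [], by rw [← hθ, hvc]; simp⟩ hfac) (ha _) hav hcv hca
  refine ⟨v, c, hvc, fun x hx => ?_⟩
  rw [mem_toFinset] at hx
  refine Finset.mem_sdiff.2
    ⟨mem_toFinset.2 ?_, Finset.notMem_singleton.2 fun h => hcnext (h ▸ hx)⟩
  exact subset_of_rich_blocks hr ha hu0 hi hdist hvc ⟨θ, hθ⟩ hcnext hx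

theorem exists_center_and_subset (hr : Rich (blockPrefix a u k))
    (hsf : SqFree (blockPrefix a u k)) (ha : ∀ j, a ∉ u j)
    (halph : (u 0).toFinset = (blockPrefix a u k).toFinset \ {a}) (hi : i + 3 ≤ k) :
    ∃ v c, u (i + 1) = v ++ [c] ++ v.reverse ∧
      (u (i + 2)).toFinset ⊆ (u (i + 1)).toFinset \ {c} := by
  have hu0 : ∀ x ∈ blockPrefix a u k, x ≠ a → x ∈ u 0 := fun x hx hxa => by
    simpa [← mem_toFinset, halph] using And.intro hx hxa
  induction i using Nat.strong_induction_on with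
  | _ i ih =>
  have hanti : StrictAntiOn (fun j => (u j).toFinset) (Set.Icc 1 (i + 1)) := by
    refine strictAntiOn_of_add_one_lt Set.ordConnected_Icc fun j _ hj hj' => ?_
    obtain ⟨l, rfl⟩ : ∃ l, j = l + 1 := ⟨j - 1, by grind⟩
    obtain ⟨v, c, hvc, hsub⟩ := ih l (by grind) (by grind)
    refine hsub.trans_ssubset ?_
    rw [Finset.sdiff_singleton_eq_erase]
    exact Finset.erase_ssubset (by simp [hvc])
  refine exists_center_and_subset_of_prev hr hsf ha hu0 hi ?_ fun t ht hti heq => ?_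
  · rcases i with _ | j
    · intro x hx
      rw [mem_toFinset] at hx
      obtain ⟨R, hR⟩ := exists_blockPrefix_eq (a := a) (u := u) hi
      rw [halph, Finset.mem_sdiff, Finset.mem_singleton, mem_toFinset, hR]
      exact ⟨by simp [hx], fun h => ha 1 (h ▸ hx)⟩
    · obtain ⟨v, c, -, hsub⟩ := ih j (by omega) (by omega)
      exact hsub.trans Finset.sdiff_subset
  · exact (hanti ⟨ht, by omega⟩ ⟨by omega, le_rfl⟩ (by omega)).ne
      (congrArg toFinset heq.symm)

end Blocks

theorem alph_decreasing_lemma_general {α : Type*} [DecidableEq α] (k : ℕ) (a₁ : α)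
    (u : ℕ → List α) (w : List α)
    (hw : w = List.intercalate [a₁] ((List.range k).map u))
    (hrich : Rich w) (hsf : SqFree w)
    (hu1 : (u 0).toFinset = w.toFinset \ {a₁})
    (ha1 : ∀ i, a₁ ∉ u i) :
    ∀ i : ℕ, 1 ≤ i → i ≤ k - 2 →
      (u i) ≠ [] ∧ Palindromic (u i) ∧ Odd (u i).length ∧
      ∃ (v : List α) (c : α), u i = v ++ [c] ++ v.reverse ∧
        (u (i + 1)).toFinset ⊆ (u i).toFinset \ {c} := by
  change w = blockPrefix a₁ u k at hw
  subst hw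
  intro i hi1 hi2
  obtain ⟨j, rfl⟩ : ∃ j, i = j + 1 := ⟨i - 1, by omega⟩
  obtain ⟨v, c, hvc, hsub⟩ :=
    exists_center_and_subset hrich hsf ha1 hu1 (by omega : j + 3 ≤ k)
  exact ⟨by simp [hvc], hvc ▸ palindromic_append_singleton_append_reverse v c,
    ⟨v.length, by simp [hvc]; ring⟩, v, c, hvc, hsub⟩

theorem alph_decreasing_lemma {α : Type*} [DecidableEq α] (n k : ℕ) (a₁ : α)
    (u : ℕ → List α) (w : List α)
    (hw : w = List.intercalate [a₁] ((List.range k).map u))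
    (hrich : Rich w) (hsf : SqFree w)
    (hn : 3 ≤ n) (hk : 3 ≤ k)
    (halph : w.toFinset.card = n)
    (hu1 : (u 0).toFinset = w.toFinset \ {a₁})
    (ha1 : ∀ i, a₁ ∉ u i) :
    ∀ i : ℕ, 1 ≤ i → i ≤ k - 2 →
      (u i) ≠ [] ∧ Palindromic (u i) ∧ Odd (u i).length ∧
      ∃ (v : List α) (c : α), u i = v ++ [c] ++ v.reverse ∧
        (u (i + 1)).toFinset ⊆ (u i).toFinset \ {c} :=
  alph_decreasing_lemma_general k a₁ u w hw hrich hsf hu1 ha1
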